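/- Let Γ be a nonempty parameter-bounded family of Hénon-form maps. Then for every γ ∈ Γ^ℤ, the set J_γ⁺ = ∂K_γ⁺ has no isolated point; in particular J_γ⁺ is uncountable. The same holds for J_γ⁻ = ∂K_γ⁻. -/

import Mathlib

open Complex Filter Set Topology MeasureTheory Bornology

noncomputable section

/-- A Hénon-form map `f(x,y) = (y + a, p(y) - δ x)` with `δ ≠ 0` and `deg p ≥ 2`. -/
structure HenonMap : Type where
  a : ℂ
  δ : ℂ
  p : Polynomial ℂ
  hδ : δ ≠ 0
  hdeg : 2 ≤ p.natDegree

namespace HenonMap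

/-- The map itself. -/
def toFun (f : HenonMap) (z : ℂ × ℂ) : ℂ × ℂ :=
  (z.2 + f.a, f.p.eval z.2 - f.δ * z.1)

/-- The inverse map `f⁻¹(x,y) = (δ⁻¹ (p(x - a) - y), x - a)`. -/
def invFun (f : HenonMap) (z : ℂ × ℂ) : ℂ × ℂ :=
  (f.δ⁻¹ * (f.p.eval (z.1 - f.a) - z.2), z.1 - f.a)

end HenonMap

/-- `V_R⁺ = {(x,y) : max(R,|x|) < |y|}`. -/
def VPlus (R : ℝ) : Set (ℂ × ℂ) := {z | max R (‖z.1‖) < ‖z.2‖}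

/-- `V_R⁻ = {(x,y) : max(R,|y|) < |x|}`. -/
def VMinus (R : ℝ) : Set (ℂ × ℂ) := {z | max R (‖z.2‖) < ‖z.1‖}

/-- `D_R = {(x,y) : max(|x|,|y|) < R}`. -/
def DDisk (R : ℝ) : Set (ℂ × ℂ) := {z | max (‖z.1‖) (‖z.2‖) < R}

/-- Condition (A) for `(R, ρ)`. -/
def CondA (f : HenonMap) (R ρ : ℝ) : Prop :=
  (∀ z ∈ closure (VPlus R),
    f.toFun z ∈ VPlus R ∧ ρ * ‖z.2‖ < ‖(f.toFun z).2‖) ∧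
  (∀ z ∈ closure (VMinus R),
    f.invFun z ∈ VMinus R ∧ ρ * ‖z.1‖ < ‖(f.invFun z).1‖)

/-- A parameter-bounded family of Hénon-form maps. -/
def ParamBounded (Γ : Set HenonMap) : Prop :=
  ∃ (D : ℕ) (A d₀ Δ m M : ℝ),
    2 ≤ D ∧ 0 ≤ A ∧ 0 < d₀ ∧ d₀ ≤ Δ ∧ 0 < m ∧ m ≤ M ∧
    ∀ f ∈ Γ,
      f.p.natDegree ≤ D ∧ ‖f.a‖ ≤ A ∧
      d₀ ≤ ‖f.δ‖ ∧ ‖f.δ‖ ≤ Δ ∧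
      (∀ i : ℕ, ‖f.p.coeff i‖ ≤ M) ∧
      m ≤ ‖f.p.leadingCoeff‖

/-- Forward composition: `fwd γ n = γ_{n-1} ∘ ⋯ ∘ γ₀`. -/
def fwd (γ : ℤ → HenonMap) : ℕ → (ℂ × ℂ) → ℂ × ℂ
  | 0 => id
  | n + 1 => fun z => (γ (n : ℤ)).toFun (fwd γ n z)

/-- Backward composition: `bwd γ n = γ_{-n}⁻¹ ∘ ⋯ ∘ γ_{-1}⁻¹`. -/
def bwd (γ : ℤ → HenonMap) : ℕ → (ℂ × ℂ) → ℂ × ℂ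
  | 0 => id
  | n + 1 => fun z => (γ (-((n : ℤ) + 1))).invFun (bwd γ n z)

/-- `K_γ⁺` : points with bounded forward orbit. -/
def KPlus (γ : ℤ → HenonMap) : Set (ℂ × ℂ) :=
  {z | IsBounded (Set.range fun n : ℕ => fwd γ n z)}

/-- `K_γ⁻` : points with bounded backward orbit. -/
def KMinus (γ : ℤ → HenonMap) : Set (ℂ × ℂ) :=
  {z | IsBounded (Set.range fun n : ℕ => bwd γ n z)}

/-- `I_γ⁺` : points whose forward orbit tends to infinity in norm. -/
def IPlus (γ : ℤ → HenonMap) : Set (ℂ × ℂ) :=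
  {z | Tendsto (fun n : ℕ => ‖fwd γ n z‖) atTop atTop}

/-- `I_γ⁻` : points whose backward orbit tends to infinity in norm. -/
def IMinus (γ : ℤ → HenonMap) : Set (ℂ × ℂ) :=
  {z | Tendsto (fun n : ℕ => ‖bwd γ n z‖) atTop atTop}

/-- The iterated shift: `(σⁿ γ)_j = γ_{j+n}`. -/
def shiftIter (γ : ℤ → HenonMap) (n : ℕ) : ℤ → HenonMap := fun j => γ (j + n)

/-- `log⁺ t = max (log t) 0`. -/
def logPlus (t : ℝ) : ℝ := max (Real.log t) 0

/-- `G_{γ,n}⁺(z) = (deg γ_{n-1} ⋯ deg γ₀)⁻¹ log⁺ ‖γ_{n-1} ∘ ⋯ ∘ γ₀ (z)‖`. -/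
def GPlusN (γ : ℤ → HenonMap) (n : ℕ) (z : ℂ × ℂ) : ℝ :=
  (∏ j ∈ Finset.range n, ((γ (j : ℤ)).p.natDegree : ℝ))⁻¹ * logPlus ‖fwd γ n z‖

/-- `G_{γ,n}⁻(z) = (deg γ_{-1} ⋯ deg γ_{-n})⁻¹ log⁺ ‖γ_{-n}⁻¹ ∘ ⋯ ∘ γ_{-1}⁻¹ (z)‖`. -/
def GMinusN (γ : ℤ → HenonMap) (n : ℕ) (z : ℂ × ℂ) : ℝ :=
  (∏ j ∈ Finset.range n, ((γ (-((j : ℤ) + 1))).p.natDegree : ℝ))⁻¹ * logPlus ‖bwd γ n z‖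


/-!
For a parameter-bounded family there is one radius `R` such that every map sends the cone
`V_R⁺ = {max (R, |x|) < |y|}` into itself while doubling `|y|`, and every inverse does the same
for `V_R⁻` and `|x|`. Hence `K⁺` is the set of points whose orbit never enters `V_R⁺`: a closed
set, neither empty nor all of `ℂ²`. It has no isolated point, by the minimum modulus principle on
vertical discs, and in `ℂ²` the boundary of a closed set without isolated points has none either;
a nonempty perfect set is uncountable. `K⁻` is `K⁺` for the inverse maps conjugated by
`(x, y) ↦ (y, x)`.
-/

open Metric

section Topology

variable {E : Type*} [NormedAddCommGroup E] [NormedSpace ℝ E]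

theorem isPreconnected_ball_diff_singleton (h : 1 < Module.rank ℝ E) (z : E) (ε : ℝ) :
    IsPreconnected (ball z ε \ {z}) := by
  have hpolar : ball z ε \ {z} = (fun p : ℝ × E => z + p.1 • p.2) '' (Ioo 0 ε ×ˢ sphere 0 1) := by
    ext w
    constructor
    · rintro ⟨hw, hwz⟩
      have hpos : 0 < ‖w - z‖ := norm_pos_iff.2 (sub_ne_zero.2 hwz)
      refine ⟨(‖w - z‖, ‖w - z‖⁻¹ • (w - z)), ⟨⟨hpos, ?_⟩, ?_⟩, ?_⟩
      · rwa [← dist_eq_norm]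
      · simp [norm_smul, hpos.ne']
      · simp [smul_smul, hpos.ne']
    · rintro ⟨⟨r, u⟩, ⟨⟨hr, hrε⟩, hu⟩, rfl⟩
      rw [mem_sphere_zero_iff_norm] at hu
      refine ⟨by simpa [dist_eq_norm, norm_smul, hu, abs_of_pos hr] using hrε, ?_⟩
      simpa [hr.ne'] using ne_zero_of_norm_ne_zero (hu.trans_ne one_ne_zero)
  rw [hpolar]
  exact (isPreconnected_Ioo.prod (isPreconnected_sphere h 0 1)).image _ (by fun_prop)

/-- In dimension at least two, a point of `frontier K` isolated in `frontier K` would have a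
connected punctured neighbourhood meeting both `interior K` and `Kᶜ` but not `frontier K`. -/
theorem Preperfect.frontier (h : 1 < Module.rank ℝ E) {K : Set E} (hK : IsClosed K)
    (hKp : Preperfect K) : Preperfect (frontier K) := by
  intro z hz
  rw [accPt_iff_nhds]
  intro U hU
  by_contra! hiso
  obtain ⟨ε, hε, hεU⟩ := Metric.mem_nhds_iff.1 hU
  have hzK : z ∈ K := hK.frontier_subset hz
  obtain ⟨k, ⟨hkε, hkK⟩, hkz⟩ := accPt_iff_nhds.1 (hKp z hzK) _ (ball_mem_nhds z hε)
  obtain ⟨b, hbε, hbK⟩ : ∃ b ∈ ball z ε, b ∉ K :=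
    not_subset.1 fun hsub => hz.2 (mem_interior.2 ⟨_, hsub, isOpen_ball, mem_ball_self hε⟩)
  have hcover : ball z ε \ {z} ⊆ interior K ∪ Kᶜ := by
    rintro w ⟨hw, hwz⟩
    by_cases hwK : w ∈ K
    · exact Or.inl (by_contra fun hwi => hwz (hiso w ⟨hεU hw, subset_closure hwK, hwi⟩))
    · exact Or.inr hwK
  have hkint : k ∈ interior K :=
    (hcover ⟨hkε, hkz⟩).resolve_right (not_not_intro hkK)
  have hsub := (isPreconnected_ball_diff_singleton h z ε).subset_left_of_subset_union
    isOpen_interior hK.isOpen_compl (disjoint_compl_right.mono_left interior_subset) hcover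
    ⟨k, ⟨hkε, hkz⟩, hkint⟩
  exact hbK (interior_subset (hsub ⟨hbε, fun hbz => hbK (hbz ▸ hzK)⟩))

end Topology

theorem Preperfect.mem_closure_diff_singleton {X : Type*} [TopologicalSpace X] {C : Set X}
    (hC : Preperfect C) {z : X} (hz : z ∈ C) : z ∈ closure (C \ {z}) :=
  mem_closure_iff_clusterPt.2 (accPt_principal_iff_clusterPt.1 (hC z hz))

theorem Perfect.preimage_of_isOpenEmbedding {X Y : Type*} [TopologicalSpace X]
    [TopologicalSpace Y] {f : X → Y} (hf : IsOpenEmbedding f) {C : Set Y} (hC : Perfect C) :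
    Perfect (f ⁻¹' C) :=
  ⟨hC.closed.preimage hf.continuous, fun x hx => by
    rw [← comap_principal]
    exact hf.accPt_comap_iff.2 (hC.acc _ hx)⟩

theorem Perfect.not_countable {X : Type*} [MetricSpace X] [CompleteSpace X] {C : Set X}
    (hC : Perfect C) (hne : C.Nonempty) : ¬ C.Countable := by
  intro hcount
  obtain ⟨f, hfC, -, hf⟩ := hC.exists_nat_bool_injection hne
  have : Countable (ℕ → Bool) :=
    countable_univ_iff.1 ((mapsTo_univ_iff.2 fun x => hfC (mem_range_self x)).countable_of_injOn
      hf.injOn hcount)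
  rw [← Cardinal.mk_le_aleph0_iff, ← Cardinal.power_def, Cardinal.mk_bool,
    Cardinal.mk_nat] at this
  exact (Cardinal.cantor Cardinal.aleph0).not_ge this

theorem le_norm_of_forall_mem_sphere_le_norm {f : ℂ → ℂ} (hf : Differentiable ℂ f) {c : ℂ}
    {r m : ℝ} (hr : 0 < r) (h0 : ∀ w ∈ closedBall c r, f w ≠ 0)
    (hm : ∀ w ∈ sphere c r, m ≤ ‖f w‖) {w : ℂ} (hw : w ∈ closedBall c r) : m ≤ ‖f w‖ := by
  rcases le_or_gt m 0 with hm0 | hm0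
  · exact hm0.trans (norm_nonneg _)
  have hinv : DiffContOnCl ℂ (fun w => (f w)⁻¹) (ball c r) := by
    refine ⟨hf.differentiableOn.inv fun w hw => h0 w (ball_subset_closedBall hw), ?_⟩
    rw [closure_ball c hr.ne']
    exact hf.continuous.continuousOn.inv₀ h0
  have hbound := Complex.norm_le_of_forall_mem_frontier_norm_le isBounded_ball hinv (C := m⁻¹)
    (fun w hw => by
      rw [frontier_ball c hr.ne'] at hw
      rw [norm_inv]
      exact inv_anti₀ hm0 (hm w hw))
    (by rwa [closure_ball c hr.ne'])
  rw [norm_inv] at hbound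
  exact (inv_le_inv₀ (norm_pos_iff.2 (h0 w hw)) hm0).1 hbound

/-- By the minimum modulus principle, the minimum of `|g (t, ·)|` on the disc is either `0` or at
least the minimum of `|g|` over all the boundary circles, so by continuity in `t` it cannot jump
from one to the other. -/
theorem exists_zero_of_forall_mem_sphere_ne_zero {g : ℝ × ℂ → ℂ} (hg : Continuous g)
    (hgy : ∀ t, Differentiable ℂ fun y => g (t, y)) {a b r : ℝ} {c : ℂ} (hab : a ≤ b) (hr : 0 < r)
    (hsphere : ∀ t ∈ Icc a b, ∀ y ∈ sphere c r, g (t, y) ≠ 0)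
    (ha : ∃ y ∈ closedBall c r, g (a, y) = 0) : ∃ y ∈ closedBall c r, g (b, y) = 0 := by
  by_contra! hb
  obtain ⟨p, hp, hpmin⟩ :=
    ((isCompact_Icc (a := a) (b := b)).prod (isCompact_sphere c r)).exists_isMinOn
      ((nonempty_Icc.2 hab).prod (NormedSpace.sphere_nonempty.2 hr.le))
      (continuous_norm.comp hg).continuousOn
  set m := ‖g p‖
  have hm : 0 < m := norm_pos_iff.2 (hsphere p.1 hp.1 p.2 hp.2)
  set h : ℝ → ℝ := fun t => sInf ((fun y => ‖g (t, y)‖) '' closedBall c r)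
  have hh : Continuous h := (isCompact_closedBall c r).continuous_sInf (continuous_norm.comp hg)
  have hbdd : ∀ t, BddBelow ((fun y => ‖g (t, y)‖) '' closedBall c r) :=
    fun t => ⟨0, by rintro _ ⟨y, -, rfl⟩; exact norm_nonneg _⟩
  have h_zero : ∀ t, ∀ y ∈ closedBall c r, g (t, y) = 0 → h t ≤ 0 := fun t y hy hy0 =>
    (csInf_le (hbdd t) ⟨y, hy, rfl⟩).trans (by simp [hy0])
  have h_ge : ∀ t ∈ Icc a b, (∀ y ∈ closedBall c r, g (t, y) ≠ 0) → m ≤ h t := by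
    intro t ht hne
    refine le_csInf ((nonempty_closedBall.2 hr.le).image _) ?_
    rintro _ ⟨y, hy, rfl⟩
    exact le_norm_of_forall_mem_sphere_le_norm (hgy t) hr hne (fun y hy => hpmin ⟨ht, hy⟩) hy
  obtain ⟨y₀, hy₀, hy₀0⟩ := ha
  obtain ⟨t, ht, hht⟩ := intermediate_value_Icc hab hh.continuousOn
    ⟨(h_zero a y₀ hy₀ hy₀0).trans (half_pos hm).le,
      (half_le_self hm.le).trans (h_ge b (right_mem_Icc.2 hab) hb)⟩
  by_cases hz : ∀ y ∈ closedBall c r, g (t, y) ≠ 0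
  · linarith [h_ge t ht hz]
  · push Not at hz
    obtain ⟨y, hy, hy0⟩ := hz
    linarith [h_zero t y hy hy0]

/-- Push the vertical disc of radius `2η` about a zero `w₀ ∈ ball z η` horizontally until it
leaves `ball z η`; its boundary circle stays in the shell all the time. -/
theorem ne_zero_of_forall_mem_shell_ne_zero {F : ℂ × ℂ → ℂ} (hF : Continuous F)
    (hFy : ∀ x, Differentiable ℂ fun y => F (x, y)) {z : ℂ × ℂ} {η : ℝ}
    (hshell : ∀ w ∈ ball z (5 * η) \ ball z η, F w ≠ 0) {w₀ : ℂ × ℂ} (hw₀ : w₀ ∈ ball z η) :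
    F w₀ ≠ 0 := by
  intro hzero
  have hη : 0 < η := pos_of_mem_ball hw₀
  rw [mem_ball, Prod.dist_eq, max_lt_iff] at hw₀
  have hg_ne : ∀ t ∈ Icc 0 (4 * η), ∀ y ∈ closedBall (0 : ℂ) (2 * η),
      (‖y‖ = 2 * η ∨ t = 4 * η) → F (w₀.1 + t, w₀.2 + y) ≠ 0 := by
    rintro t ⟨ht0, ht⟩ y hy hedge
    rw [mem_closedBall_zero_iff] at hy
    have hx₁ := dist_triangle (w₀.1 + t) w₀.1 z.1
    have hx₂ := dist_triangle_right (w₀.1 + t) w₀.1 z.1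
    have hy₁ := dist_triangle (w₀.2 + y) w₀.2 z.2
    have hy₂ := dist_triangle_right (w₀.2 + y) w₀.2 z.2
    rw [dist_self_add_left, Complex.norm_real, Real.norm_of_nonneg ht0] at hx₁ hx₂
    rw [dist_self_add_left] at hy₁ hy₂
    apply hshell
    simp only [Set.mem_sdiff, mem_ball, Prod.dist_eq, max_lt_iff, not_and_or, not_lt]
    rcases hedge with hedge | hedge
    · exact ⟨⟨by linarith, by linarith⟩, Or.inr (by linarith)⟩
    · exact ⟨⟨by linarith, by linarith⟩, Or.inl (by linarith)⟩
  obtain ⟨y, hy, hy0⟩ := exists_zero_of_forall_mem_sphere_ne_zero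
    (g := fun p : ℝ × ℂ => F (w₀.1 + p.1, w₀.2 + p.2)) (by fun_prop)
    (fun t => (hFy (w₀.1 + t)).comp (differentiable_id.const_add w₀.2)) (by positivity)
    (by positivity : 0 < 2 * η)
    (fun t ht y hy =>
      hg_ne t ht y (sphere_subset_closedBall hy) (Or.inl (mem_sphere_zero_iff_norm.1 hy)))
    ⟨0, mem_closedBall_self (by positivity), by simpa using hzero⟩
  exact hg_ne _ ⟨by positivity, le_rfl⟩ y hy (Or.inr rfl) hy0

/-- `F` has no zeros inside the shell, so the minimum modulus principle applies on the vertical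
disc through `z`. -/
theorem le_norm_of_forall_mem_shell_le_norm {F : ℂ × ℂ → ℂ} (hF : Continuous F)
    (hFy : ∀ x, Differentiable ℂ fun y => F (x, y)) {z : ℂ × ℂ} {η m : ℝ} (hη : 0 < η)
    (hshell : ∀ w ∈ closedBall z (5 * η) \ ball z η, m ≤ ‖F w‖) : m ≤ ‖F z‖ := by
  rcases le_or_gt m 0 with hm0 | hm0
  · exact hm0.trans (norm_nonneg _)
  have hshell_ne : ∀ w ∈ closedBall z (5 * η) \ ball z η, F w ≠ 0 := fun w hw =>
    norm_pos_iff.1 (hm0.trans_le (hshell w hw))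
  have hdist : ∀ y, dist ((z.1, y) : ℂ × ℂ) z = dist y z.2 := fun y => by simp [Prod.dist_eq]
  have hslice : ∀ y, η ≤ dist y z.2 → dist y z.2 ≤ 2 * η →
      ((z.1, y) : ℂ × ℂ) ∈ closedBall z (5 * η) \ ball z η :=
    fun y h₁ h₂ => ⟨by rw [mem_closedBall, hdist]; linarith, by rw [mem_ball, hdist]; linarith⟩
  refine le_norm_of_forall_mem_sphere_le_norm (f := fun y => F (z.1, y)) (hFy z.1) (c := z.2)
    (r := 2 * η) (by positivity) (fun y hy => ?_)
    (fun y hy => hshell _ (hslice y (by rw [mem_sphere.1 hy]; linarith) (mem_sphere.1 hy).le))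
    (mem_closedBall_self (by positivity))
  rcases lt_or_ge (dist y z.2) η with h | h
  · exact ne_zero_of_forall_mem_shell_ne_zero hF hFy
      (fun w hw => hshell_ne w ⟨ball_subset_closedBall hw.1, hw.2⟩) (by rwa [mem_ball, hdist])
  · exact hshell_ne _ (hslice y h hy)

def orbit {α : Type*} (T : ℕ → α → α) : ℕ → α → α
  | 0 => id
  | n + 1 => fun z => T n (orbit T n z)

def closedVPlus (R : ℝ) : Set (ℂ × ℂ) := {z | max R ‖z.1‖ ≤ ‖z.2‖}

def closedVMinus (R : ℝ) : Set (ℂ × ℂ) := {z | max R ‖z.2‖ ≤ ‖z.1‖}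

/-- The second clause: `g⁻¹` maps `closedVMinus R` into itself without decreasing `|x|`. -/
def RespectsFiltration (R : ℝ) (g : ℂ × ℂ → ℂ × ℂ) : Prop :=
  (∀ z ∈ VPlus R, g z ∈ VPlus R ∧ 2 * ‖z.2‖ ≤ ‖(g z).2‖) ∧
  (∀ z, g z ∈ closedVMinus R → z ∈ closedVMinus R ∧ ‖(g z).1‖ ≤ ‖z.1‖)

def boundedOrbitSet (T : ℕ → ℂ × ℂ → ℂ × ℂ) : Set (ℂ × ℂ) :=
  {z | IsBounded (range fun n => orbit T n z)}

theorem VPlus_subset_closedVPlus (R : ℝ) : VPlus R ⊆ closedVPlus R :=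
  fun z hz => le_of_lt (show max R ‖z.1‖ < ‖z.2‖ from hz)

theorem VMinus_subset_closedVMinus (R : ℝ) : VMinus R ⊆ closedVMinus R :=
  fun z hz => le_of_lt (show max R ‖z.2‖ < ‖z.1‖ from hz)

theorem isOpen_VPlus (R : ℝ) : IsOpen (VPlus R) := isOpen_lt (by fun_prop) (by fun_prop)

theorem norm_snd_pos_of_mem_VPlus {R : ℝ} {z : ℂ × ℂ} (hz : z ∈ VPlus R) : 0 < ‖z.2‖ :=
  (norm_nonneg _).trans_lt ((le_max_right _ _).trans_lt hz)

theorem norm_le_of_notMem_VPlus_of_notMem_closedVMinus {R : ℝ} {z : ℂ × ℂ}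
    (h₁ : z ∉ VPlus R) (h₂ : z ∉ closedVMinus R) : ‖z‖ ≤ R := by
  simp only [VPlus, closedVMinus, mem_ofPred_eq, not_lt, not_le] at h₁ h₂
  rw [Prod.norm_def]
  rcases le_total ‖z.2‖ R with h | h
  · exact max_le ((h₂.trans_eq (max_eq_left h)).le) h
  · rw [max_eq_right h] at h₂
    rcases le_total R ‖z.1‖ with h' | h'
    · rw [max_eq_right h'] at h₁; linarith
    · rw [max_eq_left h'] at h₁; exact max_le h' h₁

section Filtration

variable {R : ℝ} {T : ℕ → ℂ × ℂ → ℂ × ℂ}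

theorem orbit_add_mem_VPlus (hT : ∀ n, RespectsFiltration R (T n)) {z : ℂ × ℂ} {n : ℕ}
    (hn : orbit T n z ∈ VPlus R) (k : ℕ) :
    orbit T (n + k) z ∈ VPlus R ∧ 2 ^ k * ‖(orbit T n z).2‖ ≤ ‖(orbit T (n + k) z).2‖ := by
  induction k with
  | zero => simpa using hn
  | succ k ih =>
    obtain ⟨hV, hnorm⟩ := (hT (n + k)).1 _ ih.1
    refine ⟨hV, ?_⟩
    calc 2 ^ (k + 1) * ‖(orbit T n z).2‖ = 2 * (2 ^ k * ‖(orbit T n z).2‖) := by ring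
      _ ≤ 2 * ‖(orbit T (n + k) z).2‖ := by linarith [ih.2]
      _ ≤ ‖(orbit T (n + (k + 1)) z).2‖ := hnorm

theorem orbit_mem_VPlus_of_le (hT : ∀ n, RespectsFiltration R (T n)) {z : ℂ × ℂ} {m n : ℕ}
    (hm : orbit T m z ∈ VPlus R) (hmn : m ≤ n) : orbit T n z ∈ VPlus R := by
  obtain ⟨k, rfl⟩ := Nat.exists_eq_add_of_le hmn
  exact (orbit_add_mem_VPlus hT hm k).1

theorem norm_orbit_fst_le_of_mem_closedVMinus (hT : ∀ n, RespectsFiltration R (T n))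
    {z : ℂ × ℂ} {n : ℕ} (hn : orbit T n z ∈ closedVMinus R) :
    ‖(orbit T n z).1‖ ≤ ‖z.1‖ := by
  induction n with
  | zero => exact le_rfl
  | succ n ih =>
    obtain ⟨hW, hnorm⟩ := (hT n).2 _ hn
    exact hnorm.trans (ih hW)

theorem norm_orbit_le (hT : ∀ n, RespectsFiltration R (T n)) {z : ℂ × ℂ}
    (hz : ∀ n, orbit T n z ∉ VPlus R) (n : ℕ) : ‖orbit T n z‖ ≤ max R ‖z.1‖ := by
  by_cases hW : orbit T n z ∈ closedVMinus R
  · have hsnd : ‖(orbit T n z).2‖ ≤ ‖(orbit T n z).1‖ := (le_max_right _ _).trans hW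
    rw [Prod.norm_def, max_eq_left hsnd]
    exact (norm_orbit_fst_le_of_mem_closedVMinus hT hW).trans (le_max_right _ _)
  · exact (norm_le_of_notMem_VPlus_of_notMem_closedVMinus (hz n) hW).trans (le_max_left _ _)

theorem mem_boundedOrbitSet_iff (hT : ∀ n, RespectsFiltration R (T n)) {z : ℂ × ℂ} :
    z ∈ boundedOrbitSet T ↔ ∀ n, orbit T n z ∉ VPlus R := by
  refine ⟨fun hb n hn => ?_, fun h => isBounded_iff_forall_norm_le.2
    ⟨_, forall_mem_range.2 (norm_orbit_le hT h)⟩⟩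
  have hb' : IsBounded (range fun n => orbit T n z) := hb
  obtain ⟨C, hC⟩ := isBounded_iff_forall_norm_le.1 hb'
  have hpos := norm_snd_pos_of_mem_VPlus hn
  obtain ⟨k, hk⟩ := pow_unbounded_of_one_lt (C / ‖(orbit T n z).2‖) one_lt_two
  rw [div_lt_iff₀ hpos] at hk
  have hgrow := (orbit_add_mem_VPlus hT hn k).2
  have hbound := (norm_snd_le (orbit T (n + k) z)).trans (hC _ (mem_range_self (n + k)))
  linarith

theorem differentiable_orbit (hd : ∀ n, Differentiable ℂ (T n)) (n : ℕ) :
    Differentiable ℂ (orbit T n) := by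
  induction n with
  | zero => exact differentiable_id
  | succ n ih => exact (hd n).comp ih

theorem isClosed_boundedOrbitSet (hT : ∀ n, RespectsFiltration R (T n))
    (hd : ∀ n, Differentiable ℂ (T n)) : IsClosed (boundedOrbitSet T) := by
  have hK : boundedOrbitSet T = ⋂ n, (orbit T n ⁻¹' VPlus R)ᶜ := by
    ext z
    simp [mem_boundedOrbitSet_iff hT]
  rw [hK]
  exact isClosed_iInter fun n =>
    ((isOpen_VPlus R).preimage (differentiable_orbit hd n).continuous).isClosed_compl

/-- On the line `x = 0`, `(orbit T n ·).2` is at least `|y|` once `|y| > R`, so by the minimum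
modulus principle it cannot be zero-free. -/
theorem exists_orbit_snd_eq_zero (hT : ∀ n, RespectsFiltration R (T n))
    (hd : ∀ n, Differentiable ℂ (T n)) (n : ℕ) : ∃ w : ℂ, (orbit T n (0, w)).2 = 0 := by
  set f : ℂ → ℂ := fun w => (orbit T n (0, w)).2
  have hf : Differentiable ℂ f :=
    differentiable_snd.comp ((differentiable_orbit hd n).comp
      ((differentiable_const 0).prodMk differentiable_id))
  by_contra! h0
  set ρ := max R ‖f 0‖ + 1 with hρ_def
  have hρ : 0 < ρ := by positivity
  have hsphere : ∀ w ∈ sphere (0 : ℂ) ρ, ρ ≤ ‖f w‖ := by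
    intro w hw
    rw [mem_sphere_zero_iff_norm] at hw
    have hV : orbit T 0 ((0 : ℂ), w) ∈ VPlus R := by
      show max R ‖(0 : ℂ)‖ < ‖w‖
      rw [norm_zero, hw]
      linarith [max_le_max_left R (norm_nonneg (f 0))]
    have hgrow := (orbit_add_mem_VPlus hT hV n).2
    rw [zero_add] at hgrow
    calc ρ ≤ 2 ^ n * ρ := le_mul_of_one_le_left hρ.le (one_le_pow₀ one_le_two)
      _ = 2 ^ n * ‖(orbit T 0 ((0 : ℂ), w)).2‖ := by rw [← hw]; rfl
      _ ≤ ‖f w‖ := hgrow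
  have := le_norm_of_forall_mem_sphere_le_norm hf hρ (fun w _ => h0 w) hsphere
    (mem_closedBall_self hρ.le)
  linarith [le_max_right R ‖f 0‖]

theorem boundedOrbitSet_nonempty (hT : ∀ n, RespectsFiltration R (T n))
    (hd : ∀ n, Differentiable ℂ (T n)) : (boundedOrbitSet T).Nonempty := by
  set A : ℕ → Set ℂ := fun n => (fun w => orbit T n ((0 : ℂ), w)) ⁻¹' (VPlus R)ᶜ
  have hA_closed : ∀ n, IsClosed (A n) := fun n =>
    (isOpen_VPlus R).isClosed_compl.preimage
      ((differentiable_orbit hd n).continuous.comp (continuous_const.prodMk continuous_id))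
  have hA_anti : ∀ n, A (n + 1) ⊆ A n :=
    fun n _ hw hV => hw (orbit_mem_VPlus_of_le hT hV n.le_succ)
  have hA_ne : ∀ n, (A n).Nonempty := fun n =>
    (exists_orbit_snd_eq_zero hT hd n).imp fun w hw hV => by
      simpa [hw] using norm_snd_pos_of_mem_VPlus hV
  have hA_compact : IsCompact (A 0) := by
    refine isCompact_of_isClosed_isBounded (hA_closed 0)
      (isBounded_iff_forall_norm_le.2 ⟨max R 0, fun w hw => ?_⟩)
    have hw' : ¬ max R ‖(0 : ℂ)‖ < ‖w‖ := hw
    rwa [norm_zero, not_lt] at hw'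
  obtain ⟨w, hw⟩ :=
    IsCompact.nonempty_iInter_of_sequence_nonempty_isCompact_isClosed A hA_anti hA_ne hA_compact
      hA_closed
  exact ⟨(0, w), (mem_boundedOrbitSet_iff hT).2 (mem_iInter.1 hw)⟩

theorem boundedOrbitSet_ne_univ (hT : ∀ n, RespectsFiltration R (T n)) :
    boundedOrbitSet T ≠ univ := by
  intro h
  refine (mem_boundedOrbitSet_iff hT).1 (h ▸ mem_univ ((0 : ℂ), ((|R| + 1 : ℝ) : ℂ))) 0 ?_
  show max R ‖(0 : ℂ)‖ < ‖((|R| + 1 : ℝ) : ℂ)‖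
  rw [norm_zero, Complex.norm_real, Real.norm_of_nonneg (by positivity)]
  exact max_lt (by linarith [le_abs_self R]) (by positivity)

theorem exists_forall_orbit_mem_VPlus_of_isCompact (hT : ∀ n, RespectsFiltration R (T n))
    (hd : ∀ n, Differentiable ℂ (T n)) {S : Set (ℂ × ℂ)} (hS : IsCompact S)
    (hSK : Disjoint S (boundedOrbitSet T)) : ∃ N, ∀ w ∈ S, orbit T N w ∈ VPlus R := by
  refine hS.elim_directed_cover _
    (fun n => (isOpen_VPlus R).preimage (differentiable_orbit hd n).continuous) (fun w hw => ?_)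
    (Monotone.directed_le fun _ _ hmn _ hw => orbit_mem_VPlus_of_le hT hw hmn)
  have hwK := hSK.notMem_of_mem_left hw
  rw [mem_boundedOrbitSet_iff hT] at hwK
  push Not at hwK
  exact mem_iUnion.2 hwK

/-- If `z` were isolated in the bounded-orbit set, a shell around `z` would escape into `V_R⁺` by
some time `N`; after `k` more steps `|y|` exceeds `2 ^ k R` on the shell, hence at `z`. -/
theorem preperfect_boundedOrbitSet (hR : 0 < R) (hT : ∀ n, RespectsFiltration R (T n))
    (hd : ∀ n, Differentiable ℂ (T n)) : Preperfect (boundedOrbitSet T) := by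
  intro z hz
  rw [accPt_iff_nhds]
  intro U hU
  by_contra! hiso
  obtain ⟨ε, hε, hεU⟩ := Metric.mem_nhds_iff.1 hU
  have hη : 0 < ε / 6 := by positivity
  have hshell : Disjoint (closedBall z (5 * (ε / 6)) \ ball z (ε / 6)) (boundedOrbitSet T) := by
    refine disjoint_left.2 fun w ⟨hw, hwη⟩ hwK => hwη ?_
    rw [hiso w ⟨hεU (closedBall_subset_ball (by linarith) hw), hwK⟩]
    exact mem_ball_self hη
  obtain ⟨N, hN⟩ := exists_forall_orbit_mem_VPlus_of_isCompact hT hd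
    ((isCompact_closedBall z (5 * (ε / 6))).diff isOpen_ball) hshell
  have hz' : IsBounded (range fun n => orbit T n z) := hz
  obtain ⟨C, hC⟩ := isBounded_iff_forall_norm_le.1 hz'
  obtain ⟨k, hk⟩ := pow_unbounded_of_one_lt (C / R) one_lt_two
  rw [div_lt_iff₀ hR] at hk
  have hF : Differentiable ℂ fun w => (orbit T (N + k) w).2 :=
    differentiable_snd.comp (differentiable_orbit hd _)
  have hFz := le_norm_of_forall_mem_shell_le_norm (m := 2 ^ k * R) hF.continuous
    (fun x => hF.comp ((differentiable_const x).prodMk differentiable_id)) hη fun w hw => by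
      have hgrow := (orbit_add_mem_VPlus hT (hN w hw) k).2
      have hR' : R < ‖(orbit T N w).2‖ := (le_max_left _ _).trans_lt (hN w hw)
      nlinarith [pow_pos (two_pos : (0 : ℝ) < 2) k]
  linarith [(norm_snd_le _).trans (hC _ (mem_range_self (N + k)))]

theorem perfect_and_nonempty_frontier_boundedOrbitSet (hR : 0 < R)
    (hT : ∀ n, RespectsFiltration R (T n)) (hd : ∀ n, Differentiable ℂ (T n)) :
    Perfect (frontier (boundedOrbitSet T)) ∧ (frontier (boundedOrbitSet T)).Nonempty :=
  ⟨⟨isClosed_frontier, (preperfect_boundedOrbitSet hR hT hd).frontier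
      (by simp only [rank_prod, Complex.rank_real_complex, Cardinal.lift_id]; norm_num)
      (isClosed_boundedOrbitSet hT hd)⟩,
    nonempty_frontier_iff.2 ⟨boundedOrbitSet_nonempty hT hd, boundedOrbitSet_ne_univ hT⟩⟩

end Filtration

theorem Polynomial.mul_norm_le_norm_eval {𝕜 : Type*} [NormedField 𝕜] {q : Polynomial 𝕜} {D : ℕ}
    {m M : ℝ} (h2 : 2 ≤ q.natDegree) (hD : q.natDegree ≤ D) (hm : m ≤ ‖q.leadingCoeff‖)
    (hM : ∀ i, ‖q.coeff i‖ ≤ M) {y : 𝕜} (hy : 1 ≤ ‖y‖) (hDM : D * M ≤ m * ‖y‖) :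
    (m * ‖y‖ - D * M) * ‖y‖ ≤ ‖q.eval y‖ := by
  obtain ⟨e, he⟩ := Nat.exists_eq_add_of_le' h2
  have hM0 : 0 ≤ M := (norm_nonneg _).trans (hM 0)
  have hsplit : q.eval y = q.leadingCoeff * y ^ (e + 2) +
      ∑ i ∈ Finset.range (e + 2), q.coeff i * y ^ i := by
    rw [Polynomial.eval_eq_sum_range, he, Finset.sum_range_succ, add_comm, ← he]
    rfl
  have hlow : ‖∑ i ∈ Finset.range (e + 2), q.coeff i * y ^ i‖ ≤ D * M * ‖y‖ ^ (e + 1) :=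
    calc _ ≤ ∑ i ∈ Finset.range (e + 2), M * ‖y‖ ^ (e + 1) :=
          (norm_sum_le _ _).trans <| Finset.sum_le_sum fun i hi => by
            rw [norm_mul, norm_pow]
            have hi' := Finset.mem_range.1 hi
            exact mul_le_mul (hM i) (pow_le_pow_right₀ hy (by omega)) (by positivity) hM0
      _ = (e + 2 : ℕ) * M * ‖y‖ ^ (e + 1) := by simp [mul_assoc]
      _ ≤ D * M * ‖y‖ ^ (e + 1) := by gcongr; exact_mod_cast he ▸ hD
  have hlead : m * ‖y‖ ^ (e + 2) ≤ ‖q.leadingCoeff * y ^ (e + 2)‖ := by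
    rw [norm_mul, norm_pow]
    exact mul_le_mul_of_nonneg_right hm (by positivity)
  have htri := norm_sub_norm_le (q.leadingCoeff * y ^ (e + 2))
    (-∑ i ∈ Finset.range (e + 2), q.coeff i * y ^ i)
  rw [norm_neg, sub_neg_eq_add, ← hsplit] at htri
  have hpow : 1 ≤ ‖y‖ ^ e := one_le_pow₀ hy
  have hnonneg : 0 ≤ (m * ‖y‖ - D * M) * ‖y‖ := mul_nonneg (by linarith) (by linarith)
  calc (m * ‖y‖ - D * M) * ‖y‖ ≤ ‖y‖ ^ e * ((m * ‖y‖ - D * M) * ‖y‖) :=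
        le_mul_of_one_le_left hnonneg hpow
    _ = m * ‖y‖ ^ (e + 2) - D * M * ‖y‖ ^ (e + 1) := by ring
    _ ≤ ‖q.eval y‖ := by linarith

namespace HenonMap

theorem leftInverse_invFun (f : HenonMap) : Function.LeftInverse f.invFun f.toFun := fun z => by
  ext <;> simp [toFun, invFun, f.hδ]

theorem rightInverse_invFun (f : HenonMap) : Function.RightInverse f.invFun f.toFun := fun z => by
  ext <;> simp [toFun, invFun, f.hδ]

theorem differentiable_toFun (f : HenonMap) : Differentiable ℂ f.toFun := by
  unfold toFun; fun_prop

theorem differentiable_invFun (f : HenonMap) : Differentiable ℂ f.invFun := by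
  unfold invFun; fun_prop

theorem toFun_mem_VPlus (f : HenonMap) {D : ℕ} {A Δ m M R : ℝ} (hD : f.p.natDegree ≤ D)
    (ha : ‖f.a‖ ≤ A) (hδ : ‖f.δ‖ ≤ Δ) (hM : ∀ i, ‖f.p.coeff i‖ ≤ M) (hm : m ≤ ‖f.p.leadingCoeff‖)
    (hR2 : 2 ≤ R) (hRA : 2 * A ≤ R) (hR : 2 * D * M + 12 * Δ + 4 ≤ m * R) {z : ℂ × ℂ}
    (hz : z ∈ closedVPlus R) :
    f.toFun z ∈ VPlus R ∧ 2 * ‖z.2‖ ≤ ‖(f.toFun z).2‖ := by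
  obtain ⟨x, y⟩ := z
  obtain ⟨hRy, hxy⟩ := max_le_iff.1 (show max R ‖x‖ ≤ ‖y‖ from hz)
  have hM0 : 0 ≤ M := (norm_nonneg _).trans (hM 0)
  have hΔ0 : 0 ≤ Δ := (norm_nonneg _).trans hδ
  have hA0 : 0 ≤ A := (norm_nonneg _).trans ha
  have hD0 : (0 : ℝ) ≤ D * M := by positivity
  have hmR : D * M + Δ + 3 ≤ m * ‖y‖ := by nlinarith
  have hp := f.p.mul_norm_le_norm_eval (y := y) f.hdeg hD hm hM (by linarith) (by linarith)
  have hδx : ‖f.δ * x‖ ≤ Δ * ‖y‖ := by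
    rw [norm_mul]; exact mul_le_mul hδ hxy (norm_nonneg _) hΔ0
  have hy3 : 3 * ‖y‖ ≤ ‖f.p.eval y - f.δ * x‖ := by
    nlinarith [norm_sub_norm_le (f.p.eval y) (f.δ * x)]
  have hya : ‖y + f.a‖ ≤ 2 * ‖y‖ := by linarith [norm_add_le y f.a]
  exact ⟨show max R ‖y + f.a‖ < ‖f.p.eval y - f.δ * x‖ from max_lt (by linarith) (by linarith),
    show 2 * ‖y‖ ≤ ‖f.p.eval y - f.δ * x‖ by linarith⟩

theorem invFun_mem_VMinus (f : HenonMap) {D : ℕ} {A Δ m M R : ℝ} (hD : f.p.natDegree ≤ D)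
    (ha : ‖f.a‖ ≤ A) (hδ : ‖f.δ‖ ≤ Δ) (hM : ∀ i, ‖f.p.coeff i‖ ≤ M) (hm : m ≤ ‖f.p.leadingCoeff‖)
    (hR2 : 2 ≤ R) (hRA : 2 * A ≤ R) (hR : 2 * D * M + 12 * Δ + 4 ≤ m * R) {z : ℂ × ℂ}
    (hz : z ∈ closedVMinus R) :
    f.invFun z ∈ VMinus R ∧ 2 * ‖z.1‖ ≤ ‖(f.invFun z).1‖ := by
  obtain ⟨x, y⟩ := z
  obtain ⟨hRx, hyx⟩ := max_le_iff.1 (show max R ‖y‖ ≤ ‖x‖ from hz)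
  have hM0 : 0 ≤ M := (norm_nonneg _).trans (hM 0)
  have hδ0 : 0 < ‖f.δ‖ := norm_pos_iff.2 f.hδ
  have hD0 : (0 : ℝ) ≤ D * M := by positivity
  have hu : ‖x‖ / 2 ≤ ‖x - f.a‖ := by linarith [norm_sub_norm_le x f.a]
  have hxa : ‖x - f.a‖ ≤ 2 * ‖x‖ := by linarith [norm_sub_le x f.a]
  have hm0 : 0 < m := by nlinarith
  have hmu : D * M + 6 * Δ + 2 ≤ m * ‖x - f.a‖ := by nlinarith
  have hp := f.p.mul_norm_le_norm_eval f.hdeg hD hm hM (by linarith) (by linarith)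
  have hpx : (3 * Δ + 1) * ‖x‖ ≤ ‖f.p.eval (x - f.a)‖ := by nlinarith
  have hnum : 3 * ‖x‖ * ‖f.δ‖ ≤ ‖f.p.eval (x - f.a) - y‖ := by
    nlinarith [norm_sub_norm_le (f.p.eval (x - f.a)) y, norm_nonneg x]
  have hx3 : 3 * ‖x‖ ≤ ‖f.δ⁻¹ * (f.p.eval (x - f.a) - y)‖ := by
    rw [norm_mul, norm_inv, ← div_eq_inv_mul, le_div_iff₀ hδ0]
    exact hnum
  exact ⟨show max R ‖x - f.a‖ < ‖f.δ⁻¹ * (f.p.eval (x - f.a) - y)‖ from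
      max_lt (by linarith) (by linarith),
    show 2 * ‖x‖ ≤ ‖f.δ⁻¹ * (f.p.eval (x - f.a) - y)‖ by linarith⟩

end HenonMap

theorem respectsFiltration_of_leftInverse {R : ℝ} {g h : ℂ × ℂ → ℂ × ℂ}
    (hgh : Function.LeftInverse h g)
    (hg : ∀ z ∈ closedVPlus R, g z ∈ VPlus R ∧ 2 * ‖z.2‖ ≤ ‖(g z).2‖)
    (hh : ∀ z ∈ closedVMinus R, h z ∈ VMinus R ∧ 2 * ‖z.1‖ ≤ ‖(h z).1‖) :
    RespectsFiltration R g := by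
  refine ⟨fun z hz => hg z (VPlus_subset_closedVPlus R hz), fun z hz => ?_⟩
  obtain ⟨hV, hnorm⟩ := hh (g z) hz
  rw [hgh z] at hV hnorm
  exact ⟨VMinus_subset_closedVMinus R hV, by linarith [norm_nonneg (g z).1]⟩

theorem respectsFiltration_swap_comp_of_rightInverse {R : ℝ} {g h : ℂ × ℂ → ℂ × ℂ}
    (hgh : Function.RightInverse h g)
    (hg : ∀ z ∈ closedVPlus R, g z ∈ VPlus R ∧ 2 * ‖z.2‖ ≤ ‖(g z).2‖)
    (hh : ∀ z ∈ closedVMinus R, h z ∈ VMinus R ∧ 2 * ‖z.1‖ ≤ ‖(h z).1‖) :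
    RespectsFiltration R (Prod.swap ∘ h ∘ Prod.swap) := by
  refine ⟨fun z hz => hh z.swap (VMinus_subset_closedVMinus R hz), fun z hz => ?_⟩
  obtain ⟨hV, hnorm⟩ := hg (h z.swap) hz
  rw [hgh z.swap] at hV hnorm
  exact ⟨VMinus_subset_closedVMinus R hV,
    show ‖(h z.swap).2‖ ≤ ‖z.swap.2‖ by linarith [norm_nonneg (h z.swap).2]⟩

theorem ParamBounded.exists_respectsFiltration {Γ : Set HenonMap} (hΓ : ParamBounded Γ) :
    ∃ R > 0, ∀ f ∈ Γ, RespectsFiltration R f.toFun ∧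
      RespectsFiltration R (Prod.swap ∘ f.invFun ∘ Prod.swap) := by
  obtain ⟨D, A, _, Δ, m, M, -, -, -, -, hm, -, hbounds⟩ := hΓ
  set R := max 2 (max (2 * A) ((2 * D * M + 12 * Δ + 4) / m))
  have hR2 : 2 ≤ R := le_max_left _ _
  have hRA : 2 * A ≤ R := (le_max_left _ _).trans (le_max_right _ _)
  have hR : 2 * D * M + 12 * Δ + 4 ≤ m * R := by
    rw [← div_le_iff₀' hm]
    exact (le_max_right _ _).trans (le_max_right _ _)
  refine ⟨R, by positivity, fun f hf => ?_⟩
  obtain ⟨hD, ha, -, hδ, hM, hlead⟩ := hbounds f hf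
  have hfwd := fun z => f.toFun_mem_VPlus hD ha hδ hM hlead hR2 hRA hR (z := z)
  have hbwd := fun z => f.invFun_mem_VMinus hD ha hδ hM hlead hR2 hRA hR (z := z)
  exact ⟨respectsFiltration_of_leftInverse f.leftInverse_invFun hfwd hbwd,
    respectsFiltration_swap_comp_of_rightInverse f.rightInverse_invFun hfwd hbwd⟩

theorem fwd_eq_orbit (γ : ℤ → HenonMap) (n : ℕ) : fwd γ n = orbit (fun j => (γ j).toFun) n := by
  induction n with
  | zero => rfl
  | succ n ih => funext z; simp only [fwd, orbit, ih]

theorem bwd_eq_orbit (γ : ℤ → HenonMap) (n : ℕ) :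
    bwd γ n = Prod.swap ∘ orbit (fun j => Prod.swap ∘ (γ (-((j : ℤ) + 1))).invFun ∘ Prod.swap) n ∘
      Prod.swap := by
  induction n with
  | zero => funext z; rfl
  | succ n ih => funext z; simp [bwd, orbit, ih]

theorem KPlus_eq_boundedOrbitSet (γ : ℤ → HenonMap) :
    KPlus γ = boundedOrbitSet fun j => (γ j).toFun := by
  simp only [KPlus, boundedOrbitSet, fwd_eq_orbit]

theorem KMinus_eq_preimage_swap (γ : ℤ → HenonMap) :
    KMinus γ = Prod.swap ⁻¹'
      boundedOrbitSet fun j => Prod.swap ∘ (γ (-((j : ℤ) + 1))).invFun ∘ Prod.swap := by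
  ext z
  simp [KMinus, boundedOrbitSet, bwd_eq_orbit, isBounded_iff_forall_norm_le, Prod.norm_def,
    and_comm]

theorem stmt_17_general (Γ : Set HenonMap) (hΓ : ParamBounded Γ)
    (γ : ℤ → HenonMap) (hγ : ∀ j : ℤ, γ j ∈ Γ) :
    (∀ z ∈ frontier (KPlus γ), z ∈ closure (frontier (KPlus γ) \ {z})) ∧
    ¬ (frontier (KPlus γ)).Countable ∧
    (∀ z ∈ frontier (KMinus γ), z ∈ closure (frontier (KMinus γ) \ {z})) ∧
    ¬ (frontier (KMinus γ)).Countable := by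
  obtain ⟨R, hR, hfilt⟩ := hΓ.exists_respectsFiltration
  have hplus : Perfect (frontier (KPlus γ)) ∧ (frontier (KPlus γ)).Nonempty := by
    rw [KPlus_eq_boundedOrbitSet]
    exact perfect_and_nonempty_frontier_boundedOrbitSet hR (fun n => (hfilt _ (hγ n)).1)
      fun n => (γ n).differentiable_toFun
  have hminus : Perfect (frontier (KMinus γ)) ∧ (frontier (KMinus γ)).Nonempty := by
    have hswap : Differentiable ℂ (Prod.swap : ℂ × ℂ → ℂ × ℂ) :=
      differentiable_snd.prodMk differentiable_fst
    obtain ⟨hperf, hne⟩ := perfect_and_nonempty_frontier_boundedOrbitSet hR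
      (fun n => (hfilt _ (hγ (-((n : ℤ) + 1)))).2)
      fun n => hswap.comp ((γ _).differentiable_invFun.comp hswap)
    rw [KMinus_eq_preimage_swap, ← Homeomorph.coe_prodComm ℂ ℂ, ← Homeomorph.preimage_frontier]
    exact ⟨hperf.preimage_of_isOpenEmbedding (Homeomorph.prodComm ℂ ℂ).isOpenEmbedding,
      hne.preimage (Homeomorph.prodComm ℂ ℂ).surjective⟩
  exact ⟨fun _ hz => hplus.1.acc.mem_closure_diff_singleton hz, hplus.1.not_countable hplus.2,
    fun _ hz => hminus.1.acc.mem_closure_diff_singleton hz, hminus.1.not_countable hminus.2⟩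

/-- `J_γ± = ∂K_γ±` has no isolated points and is uncountable. -/
theorem stmt_17 (Γ : Set HenonMap) (hne : Γ.Nonempty) (hΓ : ParamBounded Γ)
    (γ : ℤ → HenonMap) (hγ : ∀ j : ℤ, γ j ∈ Γ) :
    (∀ z ∈ frontier (KPlus γ), z ∈ closure (frontier (KPlus γ) \ {z})) ∧
    ¬ (frontier (KPlus γ)).Countable ∧
    (∀ z ∈ frontier (KMinus γ), z ∈ closure (frontier (KMinus γ) \ {z})) ∧
    ¬ (frontier (KMinus γ)).Countable :=
  stmt_17_general Γ hΓ γ hγ
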